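/- arXiv:2312.00489 — 4 statements merged into one kernel-verified Lean document; each statement's English description precedes it below -/
import Mathlib

section
/- Let η_H, η_h : T_H ∪ T_h → [0,∞) be refinement indicators on a mesh T_H and its refinement T_h, satisfying the reduction axiom η_h(T_h \ T_H; v)² ≤ q_red² · η_H(T_H \ T_h; v)² with 0 < q_red < 1, where for a subset U, η(U;v)² = Σ_{T∈U} η(T;v)². Assume moreover η_h(T;v) ≤ η_H(T;v) for T ∈ T_h ∩ T_H. If the Dörfler marking criterion θ · η_H(T_H; v)² ≤ η_H(M; v)² holds for a set M ⊆ T_H \ T_h with θ ∈ (0,1], then η_h(T_h; v)² ≤ (1 − (1 − q_red²)θ) · η_H(T_H; v)², i.e. the estimator contracts with factor q(θ) = (1 − (1−q_red²)θ)^{1/2} < 1. -/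
/-! Splitting both meshes into unrefined elements `Th ∩ TH` and refined ones, the estimator
does not grow on the former and loses the fraction `1 - qred²` of its refined part on the
latter; Dörfler marking makes that refined part at least `θ` times the whole estimator. -/

open Finset

theorem sum_le_sum_sub_of_reduction {α R : Type*} [DecidableEq α]
    [CommRing R] [LinearOrder R] [IsStrictOrderedRing R]
    (TH Th : Finset α) (f g : α → R) (q : R)
    (hred : ∑ T ∈ Th \ TH, g T ≤ q * ∑ T ∈ TH \ Th, f T)
    (hle : ∀ T ∈ Th ∩ TH, g T ≤ f T) :
    ∑ T ∈ Th, g T ≤ ∑ T ∈ TH, f T - (1 - q) * ∑ T ∈ TH \ Th, f T := by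
  have hinter := sum_le_sum hle
  rw [← sum_inter_add_sum_sdiff Th TH, ← sum_inter_add_sum_sdiff TH Th, inter_comm TH Th]
  linarith

theorem estimator_reduction_general
    {α : Type*} [DecidableEq α]
    (TH Th M : Finset α) (ηH ηh : α → ℝ) (qred θ : ℝ)
    (hq0 : 0 < qred) (hq1 : qred < 1)
    (hηh_nonneg : ∀ T, 0 ≤ ηh T)
    (hreduction : ∑ T ∈ Th \ TH, (ηh T) ^ 2 ≤ qred ^ 2 * ∑ T ∈ TH \ Th, (ηH T) ^ 2)
    (hmono : ∀ T ∈ Th ∩ TH, ηh T ≤ ηH T)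
    (hM : M ⊆ TH \ Th)
    (hdorfler : θ * ∑ T ∈ TH, (ηH T) ^ 2 ≤ ∑ T ∈ M, (ηH T) ^ 2) :
    ∑ T ∈ Th, (ηh T) ^ 2 ≤ (1 - (1 - qred ^ 2) * θ) * ∑ T ∈ TH, (ηH T) ^ 2 := by
  have hmarked : θ * ∑ T ∈ TH, (ηH T) ^ 2 ≤ ∑ T ∈ TH \ Th, (ηH T) ^ 2 :=
    hdorfler.trans (sum_le_sum_of_subset_of_nonneg hM fun T _ _ => sq_nonneg _)
  have hcontr : 0 ≤ 1 - qred ^ 2 := by nlinarith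
  calc ∑ T ∈ Th, (ηh T) ^ 2
      ≤ ∑ T ∈ TH, (ηH T) ^ 2 - (1 - qred ^ 2) * ∑ T ∈ TH \ Th, (ηH T) ^ 2 :=
        sum_le_sum_sub_of_reduction TH Th _ _ _ hreduction fun T hT =>
          pow_le_pow_left₀ (hηh_nonneg T) (hmono T hT) 2
    _ ≤ ∑ T ∈ TH, (ηH T) ^ 2 - (1 - qred ^ 2) * (θ * ∑ T ∈ TH, (ηH T) ^ 2) := by
        gcongr
    _ = (1 - (1 - qred ^ 2) * θ) * ∑ T ∈ TH, (ηH T) ^ 2 := by ring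

/-- Estimator reduction under Dörfler marking. -/
theorem estimator_reduction
    {α : Type*} [DecidableEq α]
    (TH Th M : Finset α) (ηH ηh : α → ℝ) (qred θ : ℝ)
    (hq0 : 0 < qred) (hq1 : qred < 1)
    (hθ0 : 0 < θ) (hθ1 : θ ≤ 1)
    (hηH_nonneg : ∀ T, 0 ≤ ηH T) (hηh_nonneg : ∀ T, 0 ≤ ηh T)
    (hreduction : ∑ T ∈ Th \ TH, (ηh T) ^ 2 ≤ qred ^ 2 * ∑ T ∈ TH \ Th, (ηH T) ^ 2)
    (hmono : ∀ T ∈ Th ∩ TH, ηh T ≤ ηH T)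
    (hM : M ⊆ TH \ Th)
    (hdorfler : θ * ∑ T ∈ TH, (ηH T) ^ 2 ≤ ∑ T ∈ M, (ηH T) ^ 2) :
    ∑ T ∈ Th, (ηh T) ^ 2 ≤ (1 - (1 - qred ^ 2) * θ) * ∑ T ∈ TH, (ηH T) ^ 2 :=
  estimator_reduction_general TH Th M ηH ηh qred θ hq0 hq1 hηh_nonneg hreduction hmono hM hdorfler
end

section
/- Tail-summability criterion: Let (a_ℓ)_{ℓ≥0}, (b_ℓ)_{ℓ≥0} be sequences of nonnegative reals and suppose there are constants q ∈ (0,1), C₁, C₂ > 0 and δ ∈ (0,1) such that (i) a_{ℓ+1} ≤ q a_ℓ + b_ℓ for all ℓ, (ii) b_{ℓ+M} ≤ C₁ a_ℓ for all ℓ, M ≥ 0, and (iii) Σ_{ℓ'=ℓ}^{ℓ+M} b_{ℓ'}² ≤ C₂ (M+1)^{1−δ} a_ℓ² for all ℓ, M ≥ 0. Then (a_ℓ) is tail-summable: there exists C > 0 with Σ_{ℓ'=ℓ+1}^{∞} a_{ℓ'} ≤ C a_ℓ for all ℓ ≥ 0. -/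
/-!
The recursion `a (ℓ + 1) ≤ q * a ℓ + b ℓ` together with `b (ℓ + m) ≤ C₁ * a ℓ` bounds every later
term by `K * a ℓ`. Squaring the recursion and summing it over a block of length `M + 1` turns the
sublinear bound on `∑ b²` into `∑_{k ≤ M} a (ℓ + k)² ≲ (M + 1)^(1-δ) * a ℓ²`. Each of these `M + 1`
terms is at least `a (ℓ + M)² / K²`, so `a (ℓ + M) ≲ (M + 1)^(-δ/2) * a ℓ`: for a suitable block
length `N` the sequence halves every `N` steps, and the tail is dominated by a geometric series
of blocks.
-/

open Finset Filter

section TailSummability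

variable {a : ℕ → ℝ}

theorem le_mul_of_le_mul_add_of_le_mul {b : ℕ → ℝ} {q C : ℝ} (ha : ∀ n, 0 ≤ a n)
    (hq0 : 0 ≤ q) (hq1 : q < 1) (hC : 0 ≤ C) (h1 : ∀ n, a (n + 1) ≤ q * a n + b n)
    (h2 : ∀ ℓ m, b (ℓ + m) ≤ C * a ℓ) (ℓ m : ℕ) :
    a (ℓ + m) ≤ (1 + C / (1 - q)) * a ℓ := by
  have hq : 0 < 1 - q := sub_pos.mpr hq1
  induction m with
  | zero => exact le_mul_of_one_le_left (ha ℓ) (le_add_of_nonneg_right (by positivity))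
  | succ m ih =>
    -- `K = 1 + C / (1 - q)` is the fixed point of `K ↦ q * K + C + (1 - q)`.
    calc a (ℓ + (m + 1)) ≤ q * a (ℓ + m) + b (ℓ + m) := h1 (ℓ + m)
      _ ≤ q * ((1 + C / (1 - q)) * a ℓ) + C * a ℓ :=
        add_le_add (mul_le_mul_of_nonneg_left ih hq0) (h2 ℓ m)
      _ = (1 + C / (1 - q)) * a ℓ - (1 - q) * a ℓ := by field_simp; ring
      _ ≤ (1 + C / (1 - q)) * a ℓ := sub_le_self _ (mul_nonneg hq.le (ha ℓ))

theorem sq_le_mul_sq_add_sq_div {x y z q : ℝ} (hx : 0 ≤ x) (hxyz : x ≤ q * y + z)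
    (hq0 : 0 ≤ q) (hq1 : q < 1) : x ^ 2 ≤ q * y ^ 2 + z ^ 2 / (1 - q) := by
  have hq : 0 < 1 - q := sub_pos.mpr hq1
  -- convexity of squaring, with `q * y + z = q * y + (1 - q) * (z / (1 - q))`
  have hconvex : q * y ^ 2 + z ^ 2 / (1 - q) - (q * y + z) ^ 2
      = q / (1 - q) * ((1 - q) * y - z) ^ 2 := by field_simp; ring
  calc x ^ 2 ≤ (q * y + z) ^ 2 := pow_le_pow_left₀ hx hxyz 2
    _ ≤ q * y ^ 2 + z ^ 2 / (1 - q) := by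
      rw [← sub_nonneg, hconvex]; positivity

theorem one_sub_mul_sum_range_succ_le {u v : ℕ → ℝ} {q : ℝ} (hu0 : ∀ k, 0 ≤ u k) (hq : 0 ≤ q)
    (hu : ∀ k, u (k + 1) ≤ q * u k + v k) (n : ℕ) :
    (1 - q) * ∑ k ∈ range (n + 1), u k ≤ u 0 + ∑ k ∈ range n, v k := by
  have hshift : ∑ k ∈ range n, u (k + 1) ≤ q * ∑ k ∈ range n, u k + ∑ k ∈ range n, v k := by
    rw [mul_sum, ← sum_add_distrib]; exact sum_le_sum fun k _ => hu k
  have hlast : q * ∑ k ∈ range n, u k ≤ q * ∑ k ∈ range (n + 1), u k :=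
    mul_le_mul_of_nonneg_left (by rw [sum_range_succ]; linarith [hu0 n]) hq
  rw [sum_range_succ'] at hlast ⊢
  linarith

theorem sum_range_succ_sq_le {b : ℕ → ℝ} {q C δ : ℝ} (ha : ∀ n, 0 ≤ a n) (hq0 : 0 ≤ q)
    (hq1 : q < 1) (hC : 0 ≤ C) (hδ1 : δ < 1) (h1 : ∀ n, a (n + 1) ≤ q * a n + b n)
    (h3 : ∀ ℓ M : ℕ, ∑ k ∈ range (M + 1), b (ℓ + k) ^ 2 ≤ C * ((M : ℝ) + 1) ^ (1 - δ) * a ℓ ^ 2)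
    (ℓ M : ℕ) :
    ∑ k ∈ range (M + 1), a (ℓ + k) ^ 2
      ≤ (1 + C / (1 - q)) / (1 - q) * ((M : ℝ) + 1) ^ (1 - δ) * a ℓ ^ 2 := by
  have hq : 0 < 1 - q := sub_pos.mpr hq1
  set P : ℝ := ((M : ℝ) + 1) ^ (1 - δ)
  have hP : 1 ≤ P := Real.one_le_rpow (by linarith [M.cast_nonneg (α := ℝ)]) (by linarith)
  have hrec := one_sub_mul_sum_range_succ_le (u := fun k => a (ℓ + k) ^ 2)
    (v := fun k => b (ℓ + k) ^ 2 / (1 - q)) (fun _ => sq_nonneg _) hq0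
    (fun k => sq_le_mul_sq_add_sq_div (ha _) (h1 (ℓ + k)) hq0 hq1) M
  have hb : ∑ k ∈ range M, b (ℓ + k) ^ 2 / (1 - q) ≤ C * P * a ℓ ^ 2 / (1 - q) := by
    rw [← sum_div]
    gcongr
    exact (sum_le_sum_of_subset_of_nonneg (range_subset_range.mpr M.le_succ)
      fun _ _ _ => sq_nonneg _).trans (h3 ℓ M)
  simp only [add_zero] at hrec
  rw [← le_div_iff₀' hq] at hrec
  calc ∑ k ∈ range (M + 1), a (ℓ + k) ^ 2 ≤ (a ℓ ^ 2 + C * P * a ℓ ^ 2 / (1 - q)) / (1 - q) :=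
        hrec.trans (by gcongr)
    _ ≤ (P * a ℓ ^ 2 + C * P * a ℓ ^ 2 / (1 - q)) / (1 - q) := by
        gcongr; exact le_mul_of_one_le_left (sq_nonneg _) hP
    _ = (1 + C / (1 - q)) / (1 - q) * P * a ℓ ^ 2 := by field_simp

theorem succ_mul_sq_le_sq_mul_sum_range {K : ℝ} (ha : ∀ n, 0 ≤ a n)
    (hK : ∀ ℓ m, a (ℓ + m) ≤ K * a ℓ) (ℓ n : ℕ) :
    ((n : ℝ) + 1) * a (ℓ + n) ^ 2 ≤ K ^ 2 * ∑ k ∈ range (n + 1), a (ℓ + k) ^ 2 := by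
  calc ((n : ℝ) + 1) * a (ℓ + n) ^ 2 = ∑ _k ∈ range (n + 1), a (ℓ + n) ^ 2 := by simp
    _ ≤ ∑ k ∈ range (n + 1), K ^ 2 * a (ℓ + k) ^ 2 := sum_le_sum fun k hk => by
        have hkn : ℓ + k + (n - k) = ℓ + n := by rw [mem_range] at hk; omega
        rw [← mul_pow, ← hkn]
        exact pow_le_pow_left₀ (ha _) (hK _ _) 2
    _ = K ^ 2 * ∑ k ∈ range (n + 1), a (ℓ + k) ^ 2 := (mul_sum ..).symm

theorem exists_pos_forall_add_le_half {K D δ : ℝ} (ha : ∀ n, 0 ≤ a n) (hK0 : 0 < K) (hD : 0 < D)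
    (hδ : 0 < δ) (hK : ∀ ℓ m, a (ℓ + m) ≤ K * a ℓ)
    (hS : ∀ ℓ M : ℕ, ∑ k ∈ range (M + 1), a (ℓ + k) ^ 2 ≤ D * ((M : ℝ) + 1) ^ (1 - δ) * a ℓ ^ 2) :
    ∃ N : ℕ, 0 < N ∧ ∀ ℓ, a (ℓ + N) ≤ a ℓ / 2 := by
  have hgrow : Tendsto (fun n : ℕ => ((n : ℝ) + 1) ^ δ) atTop atTop :=
    (tendsto_rpow_atTop hδ).comp (tendsto_natCast_atTop_atTop.atTop_add tendsto_const_nhds)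
  obtain ⟨N, hN, hN0⟩ := ((hgrow.eventually_ge_atTop (4 * (K ^ 2 * D))).and
    (eventually_gt_atTop 0)).exists
  refine ⟨N, hN0, fun ℓ => ?_⟩
  have hpos : (0 : ℝ) < (N : ℝ) + 1 := by positivity
  have hdecay : ((N : ℝ) + 1) ^ δ * a (ℓ + N) ^ 2 ≤ K ^ 2 * D * a ℓ ^ 2 := by
    have h := (succ_mul_sq_le_sq_mul_sum_range ha hK ℓ N).trans
      (mul_le_mul_of_nonneg_left (hS ℓ N) (sq_nonneg K))
    have hP : 0 < ((N : ℝ) + 1) ^ (1 - δ) := Real.rpow_pos_of_pos hpos _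
    refine le_of_mul_le_mul_right ?_ hP
    calc ((N : ℝ) + 1) ^ δ * a (ℓ + N) ^ 2 * ((N : ℝ) + 1) ^ (1 - δ)
        = ((N : ℝ) + 1) * a (ℓ + N) ^ 2 := by
          rw [mul_right_comm, ← Real.rpow_add hpos, add_sub_cancel, Real.rpow_one]
      _ ≤ _ := h
      _ = K ^ 2 * D * a ℓ ^ 2 * ((N : ℝ) + 1) ^ (1 - δ) := by ring
  have hsq : a (ℓ + N) ^ 2 ≤ (a ℓ / 2) ^ 2 := by
    have h4 : 4 * (K ^ 2 * D) * a (ℓ + N) ^ 2 ≤ K ^ 2 * D * a ℓ ^ 2 :=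
      (mul_le_mul_of_nonneg_right hN (sq_nonneg _)).trans hdecay
    have hKD : 0 < K ^ 2 * D := by positivity
    nlinarith
  exact (pow_le_pow_iff_left₀ (ha _) (by linarith [ha ℓ]) two_ne_zero).mp hsq

theorem sum_range_le_of_forall_add_le_half {K : ℝ} {N : ℕ} (ha : ∀ n, 0 ≤ a n) (hK0 : 0 ≤ K)
    (hK : ∀ ℓ m, a (ℓ + m) ≤ K * a ℓ) (hN0 : 0 < N) (hN : ∀ ℓ, a (ℓ + N) ≤ a ℓ / 2)
    (ℓ M : ℕ) : ∑ k ∈ range M, a (ℓ + k) ≤ 2 * N * K * a ℓ := by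
  have hblock : ∀ ℓ, ∑ k ∈ range N, a (ℓ + k) ≤ N * (K * a ℓ) := fun ℓ => by
    simpa using sum_le_sum fun k (_ : k ∈ range N) => hK ℓ k
  have hblocks : ∀ j ℓ, ∑ k ∈ range (j * N), a (ℓ + k) ≤ 2 * N * K * a ℓ := by
    intro j
    induction j with
    | zero => intro ℓ; simpa using mul_nonneg (by positivity) (ha ℓ)
    | succ j ih =>
      intro ℓ
      have htail := (ih (ℓ + N)).trans (mul_le_mul_of_nonneg_left (hN ℓ) (by positivity))
      rw [add_one_mul, add_comm, sum_range_add]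
      simp only [← add_assoc]
      linarith [hblock ℓ]
  calc ∑ k ∈ range M, a (ℓ + k) ≤ ∑ k ∈ range (M * N), a (ℓ + k) :=
        sum_le_sum_of_subset_of_nonneg (range_subset_range.mpr (Nat.le_mul_of_pos_right M hN0))
          fun _ _ _ => ha _
    _ ≤ 2 * N * K * a ℓ := hblocks M ℓ

end TailSummability

theorem tail_summability_criterion_general
    (a b : ℕ → ℝ) (q C₁ C₂ δ : ℝ)
    (hq0 : 0 < q) (hq1 : q < 1)
    (hC₁ : 0 < C₁) (hC₂ : 0 < C₂)
    (hδ0 : 0 < δ) (hδ1 : δ < 1)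
    (ha : ∀ ℓ, 0 ≤ a ℓ)
    (h1 : ∀ ℓ, a (ℓ + 1) ≤ q * a ℓ + b ℓ)
    (h2 : ∀ ℓ M : ℕ, b (ℓ + M) ≤ C₁ * a ℓ)
    (h3 : ∀ ℓ M : ℕ,
      ∑ k ∈ Finset.range (M + 1), (b (ℓ + k)) ^ 2
        ≤ C₂ * ((M : ℝ) + 1) ^ ((1 : ℝ) - δ) * (a ℓ) ^ 2) :
    ∃ C : ℝ, 0 < C ∧
      ∀ ℓ M : ℕ, ∑ k ∈ Finset.range M, a (ℓ + 1 + k) ≤ C * a ℓ := by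
  have hq : 0 < 1 - q := sub_pos.mpr hq1
  set K := 1 + C₁ / (1 - q)
  have hK0 : 0 < K := by positivity
  have hK := le_mul_of_le_mul_add_of_le_mul ha hq0.le hq1 hC₁.le h1 h2
  obtain ⟨N, hN0, hN⟩ := exists_pos_forall_add_le_half ha hK0 (by positivity) hδ0 hK
    (sum_range_succ_sq_le ha hq0.le hq1 hC₂.le hδ1 h1 h3)
  refine ⟨2 * N * K, by positivity, fun ℓ M => ?_⟩
  calc ∑ k ∈ range M, a (ℓ + 1 + k) ≤ ∑ k ∈ range (M + 1), a (ℓ + k) := by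
        simp only [sum_range_succ' (fun k => a (ℓ + k)), add_zero, add_assoc, add_comm 1]
        linarith [ha ℓ]
    _ ≤ 2 * N * K * a ℓ := sum_range_le_of_forall_add_le_half ha hK0.le hK hN0 hN ℓ (M + 1)

/-- Tail-summability criterion from [fps2023, Lemma 5]. -/
theorem tail_summability_criterion
    (a b : ℕ → ℝ) (q C₁ C₂ δ : ℝ)
    (hq0 : 0 < q) (hq1 : q < 1)
    (hC₁ : 0 < C₁) (hC₂ : 0 < C₂)
    (hδ0 : 0 < δ) (hδ1 : δ < 1)
    (ha : ∀ ℓ, 0 ≤ a ℓ) (hb : ∀ ℓ, 0 ≤ b ℓ)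
    (h1 : ∀ ℓ, a (ℓ + 1) ≤ q * a ℓ + b ℓ)
    (h2 : ∀ ℓ M : ℕ, b (ℓ + M) ≤ C₁ * a ℓ)
    (h3 : ∀ ℓ M : ℕ,
      ∑ k ∈ Finset.range (M + 1), (b (ℓ + k)) ^ 2
        ≤ C₂ * ((M : ℝ) + 1) ^ ((1 : ℝ) - δ) * (a ℓ) ^ 2) :
    ∃ C : ℝ, 0 < C ∧
      ∀ ℓ M : ℕ, ∑ k ∈ Finset.range M, a (ℓ + 1 + k) ≤ C * a ℓ :=
  tail_summability_criterion_general a b q C₁ C₂ δ hq0 hq1 hC₁ hC₂ hδ0 hδ1 ha h1 h2 h3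
end

section
/- Equivalence of tail-summability and R-linear convergence: Let (a_ℓ)_{ℓ≥0} be a sequence of nonnegative reals. Then the following are equivalent: (i) there exists C_sum > 0 such that Σ_{ℓ'=ℓ+1}^{∞} a_{ℓ'} ≤ C_sum · a_ℓ for all ℓ ≥ 0; (ii) there exist C_lin ≥ 1 and q_lin ∈ (0,1) such that a_{ℓ+n} ≤ C_lin · q_lin^n · a_ℓ for all ℓ, n ≥ 0. -/
/-!
Let `S ℓ = ∑_{k ≥ ℓ} a k`. Tail-summability says `S (ℓ + 1) ≤ C a ℓ = C (S ℓ - S (ℓ + 1))`, so `S`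
contracts by the factor `q = C / (1 + C)`, whence
`a (ℓ + n) ≤ S (ℓ + n) ≤ q ^ n S ℓ ≤ (1 + C) q ^ n a ℓ`.
Conversely, R-linear decay bounds the tail sums by a geometric series.
-/

open Finset

theorem sum_range_le_div_of_le_geometric {b : ℕ → ℝ} {c q : ℝ} (hc : 0 ≤ c) (hq0 : 0 ≤ q)
    (hq1 : q < 1) (hb : ∀ k, b k ≤ c * q ^ k) (M : ℕ) :
    ∑ k ∈ range M, b k ≤ c / (1 - q) :=
  calc ∑ k ∈ range M, b k ≤ ∑ k ∈ range M, c * q ^ k := sum_le_sum fun k _ => hb k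
    _ = c * ∑ k ∈ Ico 0 M, q ^ k := by rw [← mul_sum, range_eq_Ico]
    _ ≤ c * (q ^ 0 / (1 - q)) := by gcongr; exact geom_sum_Ico_le_of_lt_one hq0 hq1
    _ = c / (1 - q) := by rw [pow_zero, mul_one_div]

section Tail

variable {a : ℕ → ℝ} {C : ℝ}

theorem tsum_nat_add_eq_add_tsum (hs : Summable a) (ℓ : ℕ) :
    ∑' k, a (ℓ + k) = a ℓ + ∑' k, a (ℓ + 1 + k) := by
  have hsℓ : Summable fun k => a (ℓ + k) := by
    simpa only [add_comm] using (summable_nat_add_iff ℓ).2 hs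
  rw [hsℓ.tsum_eq_zero_add]
  simp only [add_zero, add_right_comm ℓ 1, ← add_assoc]

theorem tsum_nat_add_succ_le_mul_tsum (hs : Summable a) (hC : 0 ≤ C)
    (h : ∀ ℓ, ∑' k, a (ℓ + 1 + k) ≤ C * a ℓ) (ℓ : ℕ) :
    ∑' k, a (ℓ + 1 + k) ≤ C / (1 + C) * ∑' k, a (ℓ + k) := by
  rw [tsum_nat_add_eq_add_tsum hs ℓ, div_mul_eq_mul_div, le_div_iff₀ (by linarith)]
  linarith [h ℓ]

theorem tsum_nat_add_le_pow_mul_tsum (hs : Summable a) (hC : 0 ≤ C)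
    (h : ∀ ℓ, ∑' k, a (ℓ + 1 + k) ≤ C * a ℓ) (ℓ n : ℕ) :
    ∑' k, a (ℓ + n + k) ≤ (C / (1 + C)) ^ n * ∑' k, a (ℓ + k) :=
  le_geom (u := fun n => ∑' k, a (ℓ + n + k)) (by positivity) n
    fun m _ => tsum_nat_add_succ_le_mul_tsum hs hC h (ℓ + m)

theorem le_mul_geometric_of_sum_range_le (ha : ∀ ℓ, 0 ≤ a ℓ) (hC : 0 ≤ C)
    (h : ∀ ℓ M, ∑ k ∈ range M, a (ℓ + 1 + k) ≤ C * a ℓ) (ℓ n : ℕ) :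
    a (ℓ + n) ≤ (1 + C) * (C / (1 + C)) ^ n * a ℓ := by
  have hsℓ (ℓ : ℕ) : Summable fun k => a (ℓ + 1 + k) :=
    summable_of_sum_range_le (fun _ => ha _) (h ℓ)
  have hs : Summable a := by
    refine (summable_nat_add_iff 1).1 ?_
    simpa only [zero_add, add_comm 1] using hsℓ 0
  have htail (ℓ : ℕ) : ∑' k, a (ℓ + 1 + k) ≤ C * a ℓ := (hsℓ ℓ).tsum_le_of_sum_range_le (h ℓ)
  have hnonneg (ℓ : ℕ) : 0 ≤ ∑' k, a (ℓ + 1 + k) := tsum_nonneg fun _ => ha _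
  calc a (ℓ + n) ≤ ∑' k, a (ℓ + n + k) := by
        rw [tsum_nat_add_eq_add_tsum hs]; linarith [hnonneg (ℓ + n)]
    _ ≤ (C / (1 + C)) ^ n * ∑' k, a (ℓ + k) := tsum_nat_add_le_pow_mul_tsum hs hC htail ℓ n
    _ ≤ (C / (1 + C)) ^ n * ((1 + C) * a ℓ) := by
        gcongr
        rw [tsum_nat_add_eq_add_tsum hs]; linarith [htail ℓ]
    _ = (1 + C) * (C / (1 + C)) ^ n * a ℓ := by ring

end Tail

/-- Equivalence of tail-summability and R-linear convergence
    ([fps2023, Lemma 10]). -/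
theorem tail_summable_iff_Rlinear
    (a : ℕ → ℝ) (ha : ∀ ℓ, 0 ≤ a ℓ) :
    (∃ Csum : ℝ, 0 < Csum ∧
        ∀ ℓ M : ℕ, ∑ k ∈ Finset.range M, a (ℓ + 1 + k) ≤ Csum * a ℓ) ↔
    (∃ Clin qlin : ℝ, 1 ≤ Clin ∧ 0 < qlin ∧ qlin < 1 ∧
        ∀ ℓ n : ℕ, a (ℓ + n) ≤ Clin * qlin ^ n * a ℓ) := by
  constructor
  · rintro ⟨C, hC, h⟩
    exact ⟨1 + C, C / (1 + C), by linarith, by positivity, by rw [div_lt_one] <;> linarith,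
      le_mul_geometric_of_sum_range_le ha hC.le h⟩
  · rintro ⟨Cl, q, hCl, hq0, hq1, h⟩
    refine ⟨Cl * q / (1 - q), by have := sub_pos.2 hq1; positivity, fun ℓ M => ?_⟩
    have hdecay (k : ℕ) : a (ℓ + 1 + k) ≤ Cl * q * a ℓ * q ^ k := by
      rw [add_assoc]; exact (h ℓ (1 + k)).trans_eq (by ring)
    have hc : 0 ≤ Cl * q * a ℓ := by have := ha ℓ; positivity
    exact (sum_range_le_div_of_le_geometric hc hq0.le hq1 hdecay M).trans_eq (by ring)
end

section
/- Geometric-series consequence of R-linear convergence (rates = complexity): Let (a_i)_{i≥0} and (w_i)_{i≥0} be positive reals with a_j ≤ C_lin · q_lin^{j−i} · a_i for all i ≤ j, where C_lin ≥ 1 and 0 < q_lin < 1. Then for every r > 0 there exists C(r) = C_lin/(1 − q_lin^{1/r})^r such that, if w_i ≤ K · a_i^{-1/r} for all i (for some K > 0), then sup_j (Σ_{i≤j} w_i)^r · a_j ≤ C(r) · K^r. -/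
open Finset

lemma geo_aux (s : ℝ) (h0 : 0 ≤ s) (h1 : s < 1) (n : ℕ) :
    ∑ i ∈ Finset.range n, s ^ i ≤ 1 / (1 - s) := by
  have hne : s ≠ 1 := h1.ne
  rw [geom_sum_eq hne]
  have h1s : (0:ℝ) < 1 - s := by linarith
  have heq : (s ^ n - 1) / (s - 1) = (1 - s ^ n) / (1 - s) := by
    rw [← neg_div_neg_eq]; ring_nf
  rw [heq]
  gcongr
  nlinarith [pow_nonneg h0 n]

/-- Rates with respect to degrees of freedom equal rates with respect to
cumulative cost (abstract form of Corollary 6.1). -/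
theorem rates_eq_complexity
    (a w : ℕ → ℝ) (Clin qlin r K : ℝ)
    (hC : 1 ≤ Clin) (hq0 : 0 < qlin) (hq1 : qlin < 1)
    (hr : 0 < r) (hK : 0 < K)
    (hapos : ∀ i, 0 < a i) (hwpos : ∀ i, 0 < w i)
    (hlin : ∀ i j : ℕ, i ≤ j → a j ≤ Clin * qlin ^ (j - i) * a i)
    (hw : ∀ i, w i ≤ K * (a i) ^ (-(1 / r))) :
    ∀ j : ℕ,
      (∑ i ∈ Finset.range (j + 1), w i) ^ r * a j
        ≤ (Clin / (1 - qlin ^ (1 / r)) ^ r) * K ^ r := by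
  intro j
  set s : ℝ := qlin ^ (1 / r) with hs
  have hs0 : 0 < s := Real.rpow_pos_of_pos hq0 _
  have hs1 : s < 1 := Real.rpow_lt_one hq0.le hq1 (by positivity)
  have h1s : (0:ℝ) < 1 - s := by linarith
  have hCpos : (0:ℝ) < Clin := lt_of_lt_of_le one_pos hC
  have key : ∀ i, i ≤ j → w i ≤ K * Clin ^ (1 / r) * (a j) ^ (-(1 / r)) * s ^ (j - i) := by
    intro i hij
    have haj := hapos j
    have hai := hapos i
    have hden : (0:ℝ) < Clin * qlin ^ (j - i) := by positivity
    have h1 : a j / (Clin * qlin ^ (j - i)) ≤ a i := by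
      rw [div_le_iff₀ hden]
      calc a j ≤ Clin * qlin ^ (j - i) * a i := hlin i j hij
        _ = a i * (Clin * qlin ^ (j - i)) := by ring
    have h2 : (a i) ^ (-(1 / r)) ≤ (a j / (Clin * qlin ^ (j - i))) ^ (-(1 / r)) := by
      apply Real.rpow_le_rpow_of_nonpos (by positivity) h1
      simp only [neg_nonpos]
      positivity
    have h3 : (a j / (Clin * qlin ^ (j - i))) ^ (-(1 / r))
        = Clin ^ (1 / r) * (a j) ^ (-(1 / r)) * s ^ (j - i) := by
      rw [Real.rpow_neg (by positivity), Real.div_rpow haj.le hden.le,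
        Real.mul_rpow hCpos.le (by positivity)]
      rw [← Real.rpow_natCast qlin (j - i), ← Real.rpow_natCast s (j - i),
        ← Real.rpow_mul hq0.le, hs, ← Real.rpow_mul hq0.le,
        Real.rpow_neg haj.le, mul_comm ((1:ℝ)/r) (((j - i : ℕ) : ℝ))]
      ring_nf
      rw [inv_inv, inv_inv]
      ring
    calc w i ≤ K * (a i) ^ (-(1 / r)) := hw i
      _ ≤ K * (Clin ^ (1 / r) * (a j) ^ (-(1 / r)) * s ^ (j - i)) :=
          mul_le_mul_of_nonneg_left (h2.trans_eq h3) hK.le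
      _ = K * Clin ^ (1 / r) * (a j) ^ (-(1 / r)) * s ^ (j - i) := by ring
  have hsum : (∑ i ∈ Finset.range (j + 1), w i)
      ≤ K * Clin ^ (1 / r) * (a j) ^ (-(1 / r)) * (1 / (1 - s)) := by
    calc (∑ i ∈ Finset.range (j + 1), w i)
        ≤ ∑ i ∈ Finset.range (j + 1), K * Clin ^ (1 / r) * (a j) ^ (-(1 / r)) * s ^ (j - i) := by
          apply Finset.sum_le_sum
          intro i hi
          exact key i (Nat.lt_succ_iff.mp (Finset.mem_range.mp hi))
      _ = K * Clin ^ (1 / r) * (a j) ^ (-(1 / r)) * ∑ i ∈ Finset.range (j + 1), s ^ (j - i) := by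
          rw [Finset.mul_sum]
      _ ≤ K * Clin ^ (1 / r) * (a j) ^ (-(1 / r)) * (1 / (1 - s)) := by
          have hajp := hapos j
          apply mul_le_mul_of_nonneg_left _ (by positivity)
          have hrefl : ∑ i ∈ Finset.range (j + 1), s ^ (j - i)
              = ∑ k ∈ Finset.range (j + 1), s ^ k := by
            rw [← Finset.sum_range_reflect]
            apply Finset.sum_congr rfl
            intro k hk
            congr 1
            have := Finset.mem_range.mp hk
            omega
          rw [hrefl]
          exact geo_aux s hs0.le hs1 (j + 1)
  have hLpos : (0:ℝ) ≤ ∑ i ∈ Finset.range (j + 1), w i :=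
    Finset.sum_nonneg fun i _ => (hwpos i).le
  have hpow : (∑ i ∈ Finset.range (j + 1), w i) ^ r
      ≤ (K * Clin ^ (1 / r) * (a j) ^ (-(1 / r)) * (1 / (1 - s))) ^ r :=
    Real.rpow_le_rpow hLpos hsum hr.le
  have haj := hapos j
  have hrhs : (K * Clin ^ (1 / r) * (a j) ^ (-(1 / r)) * (1 / (1 - s))) ^ r
      = K ^ r * Clin * (a j)⁻¹ * (1 / (1 - s) ^ r) := by
    rw [Real.mul_rpow (by positivity) (by positivity),
        Real.mul_rpow (by positivity) (by positivity),
        Real.mul_rpow (by positivity) (by positivity),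
        ← Real.rpow_mul hCpos.le, one_div_mul_cancel hr.ne', Real.rpow_one,
        ← Real.rpow_mul haj.le, Real.div_rpow (by norm_num) h1s.le, Real.one_rpow]
    congr 1
    congr 1
    congr 1
    rw [neg_mul, one_div_mul_cancel hr.ne', Real.rpow_neg_one]
  calc (∑ i ∈ Finset.range (j + 1), w i) ^ r * a j
      ≤ (K * Clin ^ (1 / r) * (a j) ^ (-(1 / r)) * (1 / (1 - s))) ^ r * a j :=
        mul_le_mul_of_nonneg_right hpow haj.le
    _ = K ^ r * Clin * (a j)⁻¹ * (1 / (1 - s) ^ r) * a j := by rw [hrhs]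
    _ = (Clin / (1 - s) ^ r) * K ^ r := by
        field_simp
end
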